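/- arXiv:2301.01374 — 2 statements merged into one kernel-verified Lean document; each statement's English description precedes it below -/
import Mathlib

section
/- Let ψ : C → ℝ be strictly Σ-convex, let c ∈ C, and let l ∈ ℝ^n satisfy ∑_{i=1}^n l_i v_i = −c and {i : l_i < 0} ⊆ σ for some maximal cone σ ∈ Σ^max. Then −∑_{i=1}^n l_i ψ(v_i) ≤ ψ(c), and equality holds if and only if there exists a cone of Σ containing c and all the vectors v_i with l_i ≠ 0. -/
open scoped BigOperators Classical

noncomputable section

namespace BBGKZ

/-- The real vector corresponding to the `i`-th integer vector `v i`. -/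
def vR {r n : ℕ} (v : Fin n → Fin r → ℤ) (i : Fin n) : Fin r → ℝ := fun j => (v i j : ℝ)

/-- The complex vector corresponding to the `i`-th integer vector `v i`. -/
def vC {r n : ℕ} (v : Fin n → Fin r → ℤ) (i : Fin n) : Fin r → ℂ := fun j => (v i j : ℂ)

/-- The real vector corresponding to an integer vector. -/
def intVec {r : ℕ} (c : Fin r → ℤ) : Fin r → ℝ := fun j => (c j : ℝ)

/-- The complex vector corresponding to an integer vector. -/
def intVecC {r : ℕ} (c : Fin r → ℤ) : Fin r → ℂ := fun j => (c j : ℂ)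

/-- The cone `C = ∑ ℝ_{≥0} v_i`. -/
def coneC {r n : ℕ} (v : Fin n → Fin r → ℤ) : Set (Fin r → ℝ) :=
  {x | ∃ t : Fin n → ℝ, (∀ i, 0 ≤ t i) ∧ x = ∑ i, t i • vR v i}

/-- The cone `σ_I = ∑_{i ∈ I} ℝ_{≥0} v_i`. -/
def sigmaCone {r n : ℕ} (v : Fin n → Fin r → ℤ) (I : Finset (Fin n)) : Set (Fin r → ℝ) :=
  {x | ∃ t : Fin n → ℝ, (∀ i, 0 ≤ t i) ∧ (∀ i, i ∉ I → t i = 0) ∧ x = ∑ i, t i • vR v i}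

/-- `v_I = ∑_{i ∈ I} v_i`. -/
def vSum {r n : ℕ} (v : Fin n → Fin r → ℤ) (I : Finset (Fin n)) : Fin r → ℤ := ∑ i ∈ I, v i

/-- `Vol_I`: the absolute value of the determinant of the `r × r` matrix whose rows are the
vectors `v i`, `i ∈ I` (defined when `I.card = r`, and `0` otherwise). -/
def Vol {r n : ℕ} (v : Fin n → Fin r → ℤ) (I : Finset (Fin n)) : ℝ :=
  if h : I.card = r then
    |(Matrix.of fun a b : Fin r => vR v (I.orderIsoOfFin h a).1 b).det| else 0

/-- A vector of `ℝ^r` is generic if it lies in no proper linear subspace spanned by integer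
vectors. -/
def GenericVec {r : ℕ} (w : Fin r → ℝ) : Prop :=
  ∀ T : Set (Fin r → ℤ), Submodule.span ℝ (intVec '' T) ≠ ⊤ → w ∉ Submodule.span ℝ (intVec '' T)

/-- The value at `β ∈ ℂ^r` of the `ℂ`-linear extension of `μ : ℝ^r → ℝ`. -/
def muC {r : ℕ} (μ : (Fin r → ℝ) →ₗ[ℝ] ℝ) (β : Fin r → ℂ) : ℂ :=
  ∑ j, β j * (μ (Pi.single j 1) : ℂ)

/-- A solution of `bbGKZ(S, 0)` on `U`, where `S` is `C` or `C°`. -/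
def IsSol0 {r n : ℕ} (v : Fin n → Fin r → ℤ) (S : Set (Fin r → ℝ))
    (U : Set (Fin n → ℂ)) (Φ : (Fin r → ℤ) → (Fin n → ℂ) → ℂ) : Prop :=
  (∀ c : Fin r → ℤ, intVec c ∈ S → DifferentiableOn ℂ (Φ c) U) ∧
  (∀ c : Fin r → ℤ, intVec c ∈ S → ∀ i : Fin n, ∀ x ∈ U,
      fderiv ℂ (Φ c) x (Pi.single i 1) = Φ (c + v i) x) ∧
  (∀ c : Fin r → ℤ, intVec c ∈ S → ∀ μ : (Fin r → ℝ) →ₗ[ℝ] ℝ, ∀ x ∈ U,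
      (∑ i, (μ (vR v i) : ℂ) * x i * fderiv ℂ (Φ c) x (Pi.single i 1))
        + (μ (intVec c) : ℂ) * Φ c x = 0)

/-- A solution of `bbGKZ(S, β)` on `U`. -/
def IsSolBeta {r n : ℕ} (v : Fin n → Fin r → ℤ) (S : Set (Fin r → ℝ)) (β : Fin r → ℂ)
    (U : Set (Fin n → ℂ)) (Φ : (Fin r → ℤ) → (Fin n → ℂ) → ℂ) : Prop :=
  (∀ c : Fin r → ℤ, intVec c ∈ S → DifferentiableOn ℂ (Φ c) U) ∧
  (∀ c : Fin r → ℤ, intVec c ∈ S → ∀ i : Fin n, ∀ x ∈ U,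
      fderiv ℂ (Φ c) x (Pi.single i 1) = Φ (c + v i) x) ∧
  (∀ c : Fin r → ℤ, intVec c ∈ S → ∀ μ : (Fin r → ℝ) →ₗ[ℝ] ℝ, ∀ x ∈ U,
      (∑ i, (μ (vR v i) : ℂ) * x i * fderiv ℂ (Φ c) x (Pi.single i 1))
        + ((μ (intVec c) : ℂ) - muC μ β) * Φ c x = 0)

/-- The coefficients `ξ_{c,d,I}` determined by a generic vector `v0 ∈ C°`:
`ξ_{c,d,I} = (-1)^{deg c}` if `σ_I` is `r`-dimensional and for all sufficiently small `ε > 0`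
both `c + ε v0` and `d - ε v0` lie in the interior of `σ_I`, and `0` otherwise. -/
def xiCoef {r n : ℕ} (v : Fin n → Fin r → ℤ) (degZ : (Fin r → ℤ) → ℤ) (v0 : Fin r → ℝ)
    (c d : Fin r → ℤ) (I : Finset (Fin n)) : ℂ :=
  if intVec c ∈ coneC v ∧ intVec d ∈ interior (coneC v) ∧ c + d = vSum v I ∧ I.card = r ∧
      Submodule.span ℝ (vR v '' (I : Set (Fin n))) = ⊤ ∧
      (∀ᶠ ε in nhdsWithin (0 : ℝ) (Set.Ioi 0),
        intVec c + ε • v0 ∈ interior (sigmaCone v I) ∧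
        intVec d - ε • v0 ∈ interior (sigmaCone v I))
  then (-1 : ℂ) ^ (degZ c) else 0

/-- The pairing `⟨Φ, Ψ⟩ = ∑_{c,d,I} ξ_{c,d,I} Vol_I (∏_{i∈I} x_i) Φ_c Ψ_d`, where the
(finitely supported) inner sum is over lattice points `c ∈ C`, `d ∈ C°` with `c + d = v_I`. -/
def pairingXi {r n : ℕ} (v : Fin n → Fin r → ℤ)
    (ξ : (Fin r → ℤ) → (Fin r → ℤ) → Finset (Fin n) → ℂ)
    (Φ Ψ : (Fin r → ℤ) → (Fin n → ℂ) → ℂ) (x : Fin n → ℂ) : ℂ :=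
  ∑ I ∈ Finset.powersetCard r (Finset.univ : Finset (Fin n)),
    ∑ᶠ c : Fin r → ℤ,
      (if intVec c ∈ coneC v ∧ intVec (vSum v I - c) ∈ interior (coneC v) then
        ξ c (vSum v I - c) I * (Vol v I : ℂ) * (∏ i ∈ I, x i) * Φ c x * Ψ (vSum v I - c) x
      else 0)

/-- A finite simplicial fan supported on `C` with rays among the `v_i`, encoded by the finite
family of index sets of its cones. -/
structure IsFan {r n : ℕ} (v : Fin n → Fin r → ℤ) (Fam : Finset (Finset (Fin n))) : Prop where
  indep : ∀ I ∈ Fam, LinearIndependent ℝ (fun i : {x : Fin n // x ∈ I} => vR v i.1)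
  downward : ∀ I ∈ Fam, ∀ J : Finset (Fin n), J ⊆ I → J ∈ Fam
  inter : ∀ I ∈ Fam, ∀ J ∈ Fam, ∃ K ∈ Fam, K ⊆ I ∧ K ⊆ J ∧
    sigmaCone v I ∩ sigmaCone v J = sigmaCone v K
  max_cones : ∀ I ∈ Fam, ∃ J ∈ Fam, I ⊆ J ∧ J.card = r
  union_eq : (⋃ I ∈ (Fam : Set (Finset (Fin n))), sigmaCone v I) = coneC v

/-- `ψ` is strictly `Σ`-convex. -/
def StrictSigmaConvex {r n : ℕ} (v : Fin n → Fin r → ℤ) (Fam : Finset (Finset (Fin n)))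
    (ψ : (Fin r → ℝ) → ℝ) : Prop :=
  ∀ I ∈ Fam, I.card = r → ∃ ℓ : (Fin r → ℝ) →ₗ[ℝ] ℝ,
    (∀ x ∈ sigmaCone v I, ψ x = ℓ x) ∧ (∀ x ∈ coneC v, x ∉ sigmaCone v I → ℓ x < ψ x)

/-- The minimal cone of the fan containing a given point. -/
def IsMinConeOf {r n : ℕ} (v : Fin n → Fin r → ℤ) (Fam : Finset (Finset (Fin n)))
    (K : Finset (Fin n)) (w : Fin r → ℝ) : Prop :=
  K ∈ Fam ∧ w ∈ sigmaCone v K ∧ ∀ K' ∈ Fam, w ∈ sigmaCone v K' → K ⊆ K'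

/-- The cone `C_Σ` of the secondary fan corresponding to `Σ`. -/
def CSigma {r n : ℕ} (v : Fin n → Fin r → ℤ) (Fam : Finset (Finset (Fin n))) :
    Set (Fin n → ℝ) :=
  {η | ∀ I ∈ Fam, I.card = r → ∀ ℓ : (Fin r → ℝ) →ₗ[ℝ] ℝ,
    (∀ i ∈ I, ℓ (vR v i) = η i) → ∀ j, ℓ (vR v j) ≤ η j}

/-- The index set `L_{c,γ,σ;β}` of the Γ-series. -/
def Lset {r n : ℕ} (v : Fin n → Fin r → ℤ) (I0 : Finset (Fin n)) (β : Fin r → ℂ)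
    (c γ : Fin r → ℤ) : Set (Fin n → ℂ) :=
  {l | (∑ i, l i • vC v i) = β - intVecC c
    ∧ (∀ i ∉ I0, ∃ m : ℤ, l i = (m : ℂ))
    ∧ (∃ m : Fin n → ℤ,
        intVecC c + ∑ i ∈ I0ᶜ, l i • vC v i = -intVecC γ + ∑ i ∈ I0, (m i : ℂ) • vC v i)}

/-- An individual term `∏_i exp(l_i Log x_i)/Γ(1 + l_i)` of the Γ-series.  (Mathlib's
`Complex.Gamma` vanishes at the poles of `Γ`, so `1/Γ` is `0` there.) -/
def gammaTerm {n : ℕ} (l x : Fin n → ℂ) : ℂ :=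
  ∏ i, Complex.exp (l i * Complex.log (x i)) / Complex.Gamma (1 + l i)

/-- The region `R(ψ̂)`. -/
def Rregion {r n : ℕ} (v : Fin n → Fin r → ℤ) (Fam : Finset (Finset (Fin n)))
    (ψh : Fin n → ℝ) : Set (Fin n → ℂ) :=
  {x | (∀ i, x i ≠ 0 ∧ |Complex.arg (x i)| < Real.pi) ∧
    (fun i => -Real.log (‖x i‖) - ψh i) ∈ CSigma v Fam}

/-- The Γ-series `Φ^{γ,σ}_c` with parameter `β`. -/
def GammaSeries {r n : ℕ} (v : Fin n → Fin r → ℤ) (I0 : Finset (Fin n)) (β : Fin r → ℂ)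
    (γ c : Fin r → ℤ) (x : Fin n → ℂ) : ℂ :=
  ∑' l : (Lset v I0 β c γ), gammaTerm (l : Fin n → ℂ) x

/-- Absolute and uniform-on-compacts convergence of the Γ-series on a set `S`:
for every compact `K ⊆ S`, `∑_{l ∈ L} sup_{x ∈ K} |term_l(x)| < ∞`. -/
def ConvergesOn {r n : ℕ} (v : Fin n → Fin r → ℤ) (I0 : Finset (Fin n)) (β : Fin r → ℂ)
    (γ c : Fin r → ℤ) (S : Set (Fin n → ℂ)) : Prop :=
  ∀ K ⊆ S, IsCompact K →
    Summable (fun l : (Lset v I0 β c γ) =>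
      sSup ((fun x => ‖gammaTerm (l : Fin n → ℂ) x‖) '' K))

/-- `β ∈ ℂ^r` is generic: it lies in no proper affine subspace of `ℂ^r` defined over `ℚ`. -/
def GenericBeta {r : ℕ} (β : Fin r → ℂ) : Prop :=
  ∀ q : Fin r → ℚ, q ≠ 0 → ∀ q0 : ℚ, (∑ j, (q j : ℂ) * β j) ≠ (q0 : ℂ)


/-!
Let `ℓ` be the linear function supporting `ψ` on the maximal cone `σ` that contains every `v_i`
with `l_i < 0`. Then `l_i ℓ(v_i) ≤ l_i ψ(v_i)` for every `i` (with equality when `l_i < 0`) and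
`ℓ(c) ≤ ψ(c)`, while `ℓ(c) = -∑ l_i ℓ(v_i)` by linearity. Equality forces each of these
inequalities to be an equality, and by strictness this puts `c` and every `v_i` with `l_i ≠ 0`
into `σ`. Conversely, if one cone contains them all, `ψ` is linear on a maximal cone containing
it, and the two sides agree by linearity.
-/

lemma _root_.LinearMap.apply_eq_neg_sum_of_sum_smul_eq_neg {R M ι : Type*} [CommRing R]
    [AddCommGroup M] [Module R M] [Fintype ι] (ℓ : M →ₗ[R] R) {w : ι → M} {l : ι → R} {c : M}
    (h : ∑ i, l i • w i = -c) : ℓ c = -∑ i, l i * ℓ (w i) := by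
  rw [← neg_neg c, ← h, map_neg, map_sum]
  simp only [map_smul, smul_eq_mul]

section Cones

variable {r n : ℕ} (v : Fin n → Fin r → ℤ)

lemma vR_mem_sigmaCone {I : Finset (Fin n)} {i : Fin n} (hi : i ∈ I) :
    vR v i ∈ sigmaCone v I := by
  refine ⟨Pi.single i 1, fun j => ?_, fun j hj => ?_, ?_⟩
  · by_cases h : j = i <;> simp [h]
  · exact Pi.single_eq_of_ne (fun h : j = i => hj (h ▸ hi)) 1
  · simp

lemma sigmaCone_subset_coneC (I : Finset (Fin n)) : sigmaCone v I ⊆ coneC v :=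
  fun _ ⟨t, ht0, _, hx⟩ => ⟨t, ht0, hx⟩

lemma vR_mem_coneC (i : Fin n) : vR v i ∈ coneC v :=
  sigmaCone_subset_coneC v Finset.univ (vR_mem_sigmaCone v (Finset.mem_univ i))

lemma sigmaCone_mono {K J : Finset (Fin n)} (h : K ⊆ J) : sigmaCone v K ⊆ sigmaCone v J :=
  fun _ ⟨t, ht0, htK, hx⟩ => ⟨t, ht0, fun i hi => htK i (fun hiK => hi (h hiK)), hx⟩

end Cones

section SupportingFunction

variable {r n : ℕ} {v : Fin n → Fin r → ℤ} {ψ : (Fin r → ℝ) → ℝ} {I : Finset (Fin n)}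
  {ℓ : (Fin r → ℝ) →ₗ[ℝ] ℝ}
  (hℓeq : ∀ x ∈ sigmaCone v I, ψ x = ℓ x)
  (hℓlt : ∀ x ∈ coneC v, x ∉ sigmaCone v I → ℓ x < ψ x)
include hℓeq hℓlt

lemma apply_le_of_mem_coneC {x : Fin r → ℝ} (hx : x ∈ coneC v) : ℓ x ≤ ψ x := by
  by_cases hxI : x ∈ sigmaCone v I
  · exact (hℓeq x hxI).ge
  · exact (hℓlt x hx hxI).le

lemma apply_eq_iff_mem_sigmaCone {x : Fin r → ℝ} (hx : x ∈ coneC v) :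
    ℓ x = ψ x ↔ x ∈ sigmaCone v I :=
  ⟨fun h => by_contra fun hxI => (hℓlt x hx hxI).ne h, fun hxI => (hℓeq x hxI).symm⟩

variable {l : Fin n → ℝ} (hneg : ∀ i, l i < 0 → i ∈ I)
include hneg

lemma mul_apply_vR_le (i : Fin n) : l i * ℓ (vR v i) ≤ l i * ψ (vR v i) := by
  rcases lt_or_ge (l i) 0 with h | h
  · rw [hℓeq _ (vR_mem_sigmaCone v (hneg i h))]
  · exact mul_le_mul_of_nonneg_left (apply_le_of_mem_coneC hℓeq hℓlt (vR_mem_coneC v i)) h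

lemma mul_apply_vR_eq_iff (i : Fin n) :
    l i * ℓ (vR v i) = l i * ψ (vR v i) ↔ (l i ≠ 0 → vR v i ∈ sigmaCone v I) := by
  rcases lt_trichotomy (l i) 0 with h | h | h
  · simp [hℓeq _ (vR_mem_sigmaCone v (hneg i h)), vR_mem_sigmaCone v (hneg i h)]
  · simp [h]
  · rw [mul_right_inj' h.ne', apply_eq_iff_mem_sigmaCone hℓeq hℓlt (vR_mem_coneC v i)]
    exact ⟨fun hi _ => hi, fun hi => hi h.ne'⟩

lemma sum_mul_apply_vR_le : ∑ i, l i * ℓ (vR v i) ≤ ∑ i, l i * ψ (vR v i) :=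
  Finset.sum_le_sum fun i _ => mul_apply_vR_le hℓeq hℓlt hneg i

lemma sum_mul_apply_vR_eq_iff :
    ∑ i, l i * ℓ (vR v i) = ∑ i, l i * ψ (vR v i) ↔
      ∀ i, l i ≠ 0 → vR v i ∈ sigmaCone v I := by
  rw [Finset.sum_eq_sum_iff_of_le fun i _ => mul_apply_vR_le hℓeq hℓlt hneg i]
  simp only [Finset.mem_univ, true_implies, mul_apply_vR_eq_iff hℓeq hℓlt hneg]

end SupportingFunction

lemma neg_sum_mul_eq_of_linearOn_sigmaCone {r n : ℕ} {v : Fin n → Fin r → ℤ}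
    {ψ : (Fin r → ℝ) → ℝ} {J : Finset (Fin n)} {ℓ : (Fin r → ℝ) →ₗ[ℝ] ℝ}
    (hℓeq : ∀ x ∈ sigmaCone v J, ψ x = ℓ x) {c : Fin r → ℝ} (hc : c ∈ sigmaCone v J)
    {l : Fin n → ℝ} (hl : ∑ i, l i • vR v i = -c)
    (hv : ∀ i, l i ≠ 0 → vR v i ∈ sigmaCone v J) :
    -∑ i, l i * ψ (vR v i) = ψ c := by
  have hsum : ∑ i, l i * ψ (vR v i) = ∑ i, l i * ℓ (vR v i) := by
    refine Finset.sum_congr rfl fun i _ => ?_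
    by_cases hli : l i = 0
    · simp [hli]
    · rw [hℓeq _ (hv i hli)]
  rw [hsum, hℓeq c hc, ℓ.apply_eq_neg_sum_of_sum_smul_eq_neg hl]

theorem statement5_general
    (r n : ℕ)
    (v : Fin n → Fin r → ℤ)
    (Fam : Finset (Finset (Fin n))) (hFam : IsFan v Fam)
    (ψ : (Fin r → ℝ) → ℝ) (hψ : StrictSigmaConvex v Fam ψ)
    (c : Fin r → ℝ) (hc : c ∈ coneC v)
    (l : Fin n → ℝ) (hl : ∑ i, l i • vR v i = -c)
    (hneg : ∃ I ∈ Fam, I.card = r ∧ ∀ i, l i < 0 → i ∈ I) :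
    (-(∑ i, l i * ψ (vR v i)) ≤ ψ c) ∧
    ((-(∑ i, l i * ψ (vR v i)) = ψ c) ↔
      ∃ K ∈ Fam, c ∈ sigmaCone v K ∧ ∀ i, l i ≠ 0 → vR v i ∈ sigmaCone v K) := by
  obtain ⟨I, hI, hIcard, hIneg⟩ := hneg
  obtain ⟨ℓ, hℓeq, hℓlt⟩ := hψ I hI hIcard
  have hℓc : ℓ c = -∑ i, l i * ℓ (vR v i) := ℓ.apply_eq_neg_sum_of_sum_smul_eq_neg hl
  have hℓc_le : ℓ c ≤ ψ c := apply_le_of_mem_coneC hℓeq hℓlt hc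
  have hsum_le := sum_mul_apply_vR_le hℓeq hℓlt hIneg
  refine ⟨by linarith, fun heq => ⟨I, hI, ?_, ?_⟩, ?_⟩
  · exact (apply_eq_iff_mem_sigmaCone hℓeq hℓlt hc).mp (by linarith)
  · exact (sum_mul_apply_vR_eq_iff hℓeq hℓlt hIneg).mp (by linarith)
  · rintro ⟨K, hK, hcK, hvK⟩
    obtain ⟨J, hJ, hKJ, hJcard⟩ := hFam.max_cones K hK
    obtain ⟨ℓ', hℓ'eq, -⟩ := hψ J hJ hJcard
    exact neg_sum_mul_eq_of_linearOn_sigmaCone hℓ'eq (sigmaCone_mono v hKJ hcK) hl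
      fun i hi => sigmaCone_mono v hKJ (hvK i hi)

theorem statement5
    (r n : ℕ) (hr : 1 ≤ r) (hn : r ≤ n)
    (deg : (Fin r → ℝ) →ₗ[ℝ] ℝ)
    (hdegInt : ∀ m : Fin r → ℤ, ∃ k : ℤ, deg (intVec m) = (k : ℝ))
    (v : Fin n → Fin r → ℤ)
    (hv_inj : Function.Injective v)
    (hv_span : Submodule.span ℝ (Set.range (vR v)) = ⊤)
    (hv_deg : ∀ i, deg (vR v i) = 1)
    (Fam : Finset (Finset (Fin n))) (hFam : IsFan v Fam)
    (ψ : (Fin r → ℝ) → ℝ) (hψ : StrictSigmaConvex v Fam ψ)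
    (c : Fin r → ℝ) (hc : c ∈ coneC v)
    (l : Fin n → ℝ) (hl : ∑ i, l i • vR v i = -c)
    (hneg : ∃ I ∈ Fam, I.card = r ∧ ∀ i, l i < 0 → i ∈ I) :
    (-(∑ i, l i * ψ (vR v i)) ≤ ψ c) ∧
    ((-(∑ i, l i * ψ (vR v i)) = ψ c) ↔
      ∃ K ∈ Fam, c ∈ sigmaCone v K ∧ ∀ i, l i ≠ 0 → vR v i ∈ sigmaCone v K) :=
  statement5_general r n v Fam hFam ψ hψ c hc l hl hneg

end BBGKZ
end
end

section
/- Let v ∈ C° be generic, let I ∈ Σ^max be a maximal cone of Σ, and let c, d ∈ σ_I ∩ ℤ^r with c + d = v_I. For a point w in the support of Σ let σ(w) denote the minimal cone of Σ containing w. Then the following are equivalent: (i) for all sufficiently small ε > 0, both c + εv and d − εv lie in the interior of σ_I; (ii) (v + σ(c)) ∩ σ(d) ≠ ∅. -/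
open scoped BigOperators Classical

noncomputable section

/-! In the basis `(v_i)_{i ∈ I}` of `ℝ^r` the cone `σ_I` is the nonnegative orthant, its faces
are the coordinate faces, so the minimal cone of a point of `σ_I` is its coordinate support, and
`c + d = v_I` has all coordinates `1`. Genericity makes every coordinate `a_i` of `v0` nonzero.
Both conditions then decouple coordinatewise, and each is equivalent to: `a_i > 0` whenever
`c_i = 0`, and `a_i < 0` whenever `d_i = 0`. -/

open Filter Topology

theorem eventually_pos_add_mul_iff {c a : ℝ} (hc : 0 ≤ c) :
    (∀ᶠ ε in 𝓝[>] (0 : ℝ), 0 < c + ε * a) ↔ (c = 0 → 0 < a) := by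
  rcases hc.eq_or_lt with rfl | hc
  · simp only [zero_add, forall_const]
    refine ⟨fun h => ?_, fun ha => ?_⟩
    · obtain ⟨ε, hεa, hε⟩ := (h.and self_mem_nhdsWithin).exists
      exact pos_of_mul_pos_right hεa (le_of_lt hε)
    · filter_upwards [self_mem_nhdsWithin] with ε hε using mul_pos hε ha
  · refine iff_of_true ?_ fun h => absurd h hc.ne'
    have hlim : Tendsto (fun ε : ℝ => c + ε * a) (𝓝 0) (𝓝 c) :=
      (by fun_prop : Continuous fun ε : ℝ => c + ε * a).tendsto' 0 c (by simp)
    exact (hlim.eventually (eventually_gt_nhds hc)).filter_mono nhdsWithin_le_nhds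

theorem exists_nonneg_shift_iff {a c d : ℝ} (ha : a ≠ 0) (hcd : c + d = 1) :
    (∃ t, (0 ≤ t ∧ (c = 0 → t = 0)) ∧ (0 ≤ a + t ∧ (d = 0 → a + t = 0))) ↔
      (c = 0 → 0 < a) ∧ (d = 0 → a < 0) := by
  constructor
  · rintro ⟨t, ⟨ht, htc⟩, hat, hatd⟩
    refine ⟨fun hc => lt_of_le_of_ne ?_ ha.symm, fun hd => lt_of_le_of_ne ?_ ha⟩
    · linarith [htc hc]
    · linarith [hatd hd]
  · rintro ⟨hc, hd⟩
    by_cases hc0 : c = 0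
    · refine ⟨0, ⟨le_rfl, fun _ => rfl⟩, by linarith [hc hc0], fun hd0 => ?_⟩
      linarith
    · refine ⟨max 0 (-a), ⟨le_max_left _ _, fun h => absurd h hc0⟩,
        by linarith [le_max_right 0 (-a)], fun hd0 => ?_⟩
      rw [max_eq_right (by linarith [hd hd0])]
      ring

namespace Module.Basis

variable {ι E : Type*} [Fintype ι] [AddCommGroup E] [Module ℝ E] (b : Basis ι ℝ E)

theorem interior_setOf_repr_nonneg [TopologicalSpace E] [IsTopologicalAddGroup E]
    [ContinuousSMul ℝ E] [T2Space E] :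
    interior {x | ∀ i, 0 ≤ b.repr x i} = {x | ∀ i, 0 < b.repr x i} := by
  have hpre : {x | ∀ i, 0 ≤ b.repr x i} =
      b.equivFunL.toHomeomorph ⁻¹' Set.univ.pi fun _ => Set.Ici 0 := by
    ext x
    simp [Pi.le_def]
  rw [hpre, ← Homeomorph.preimage_interior, interior_pi_set Set.finite_univ]
  ext x
  simp

theorem eventually_repr_pos_add_sub_iff {p q w : E} (hp : ∀ i, 0 ≤ b.repr p i)
    (hq : ∀ i, 0 ≤ b.repr q i) :
    (∀ᶠ ε in 𝓝[>] (0 : ℝ), (∀ i, 0 < b.repr (p + ε • w) i) ∧ ∀ i, 0 < b.repr (q - ε • w) i) ↔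
      ∀ i, (b.repr p i = 0 → 0 < b.repr w i) ∧ (b.repr q i = 0 → b.repr w i < 0) := by
  simp only [map_add, map_sub, map_smul, Finsupp.add_apply, Finsupp.sub_apply,
    Finsupp.smul_apply, smul_eq_mul, ← forall_and, eventually_all, eventually_and]
  refine forall_congr' fun i => and_congr (eventually_pos_add_mul_iff (hp i)) ?_
  simp only [sub_eq_add_neg, ← mul_neg]
  rw [eventually_pos_add_mul_iff (hq i), neg_pos]

theorem exists_repr_add_iff {p q w : E} (hw : ∀ i, b.repr w i ≠ 0)
    (hpq : ∀ i, b.repr p i + b.repr q i = 1) :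
    (∃ y : E, (∀ i, 0 ≤ b.repr y i ∧ (b.repr p i = 0 → b.repr y i = 0)) ∧
        ∀ i, 0 ≤ b.repr (w + y) i ∧ (b.repr q i = 0 → b.repr (w + y) i = 0)) ↔
      ∀ i, (b.repr p i = 0 → 0 < b.repr w i) ∧ (b.repr q i = 0 → b.repr w i < 0) := by
  calc _ ↔ ∃ t : ι → ℝ, ∀ i, (0 ≤ t i ∧ (b.repr p i = 0 → t i = 0)) ∧
        (0 ≤ b.repr w i + t i ∧ (b.repr q i = 0 → b.repr w i + t i = 0)) := by
        simp only [map_add, Finsupp.add_apply, ← forall_and]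
        constructor
        · rintro ⟨y, hy⟩
          exact ⟨b.repr y, hy⟩
        · rintro ⟨t, ht⟩
          exact ⟨∑ i, t i • b i, by simpa only [b.repr_sum_self] using ht⟩
    _ ↔ ∀ i, ∃ t : ℝ, (0 ≤ t ∧ (b.repr p i = 0 → t = 0)) ∧
        (0 ≤ b.repr w i + t ∧ (b.repr q i = 0 → b.repr w i + t = 0)) := by
        simp only [Classical.skolem]
    _ ↔ _ := forall_congr' fun i => exists_nonneg_shift_iff (hw i) (hpq i)

end Module.Basis

namespace BBGKZ

theorem intVec_add {r : ℕ} (c d : Fin r → ℤ) : intVec (c + d) = intVec c + intVec d := by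
  ext
  simp [intVec]

theorem GenericVec.repr_ne_zero {r : ℕ} {ι : Type*} {w : Fin r → ℝ} (hw : GenericVec w)
    (b : Module.Basis ι ℝ (Fin r → ℝ)) {z : ι → Fin r → ℤ} (hbz : ∀ i, b i = intVec (z i))
    (i : ι) : b.repr w i ≠ 0 := by
  intro h0
  have himage : intVec '' (z '' {i}ᶜ) = b '' {i}ᶜ := by
    rw [Set.image_image]
    exact Set.image_congr fun j _ => (hbz j).symm
  refine hw (z '' {i}ᶜ) ?_ ?_ <;> rw [himage]
  · exact fun htop => b.linearIndependent.notMem_span_image (s := {i}ᶜ) (x := i) (by simp)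
      (by rw [htop]; exact Submodule.mem_top)
  · rw [b.mem_span_image]
    intro j hj
    exact Set.mem_compl_singleton_iff.2 fun hji => Finsupp.mem_support_iff.1 hj (hji ▸ h0)

section MaximalCone

variable {r n : ℕ} {v : Fin n → Fin r → ℤ} {I : Finset (Fin n)}
  (B : Module.Basis I ℝ (Fin r → ℝ)) (hB : ∀ i, B i = vR v i)
include hB

theorem sum_smul_vR_eq_sum_smul_basis {t : Fin n → ℝ} (ht : ∀ j ∉ I, t j = 0) :
    ∑ j, t j • vR v j = ∑ i : I, t i • B i := by
  rw [← Finset.sum_subset (Finset.subset_univ I) fun j _ hj => by rw [ht j hj, zero_smul],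
    ← Finset.sum_coe_sort I]
  simp only [hB]

theorem mem_sigmaCone_iff_repr {K : Finset (Fin n)} (hKI : K ⊆ I) {x : Fin r → ℝ} :
    x ∈ sigmaCone v K ↔ ∀ i : I, 0 ≤ B.repr x i ∧ (↑i ∉ K → B.repr x i = 0) := by
  constructor
  · rintro ⟨t, ht0, htK, rfl⟩
    rw [sum_smul_vR_eq_sum_smul_basis B hB fun j hj => htK j fun hjK => hj (hKI hjK),
      B.repr_sum_self]
    exact fun i => ⟨ht0 i, htK i⟩
  · intro hx
    refine ⟨fun j => if h : j ∈ I then B.repr x ⟨j, h⟩ else 0, fun j => ?_, fun j hj => ?_, ?_⟩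
    · dsimp only
      split_ifs <;> simp [(hx _).1]
    · dsimp only
      split_ifs with h
      exacts [(hx _).2 hj, rfl]
    · rw [sum_smul_vR_eq_sum_smul_basis B hB fun j hj => dif_neg hj]
      simpa using (B.sum_repr x).symm

theorem mem_interior_sigmaCone_iff_repr {x : Fin r → ℝ} :
    x ∈ interior (sigmaCone v I) ↔ ∀ i, 0 < B.repr x i := by
  have hI : sigmaCone v I = {x | ∀ i, 0 ≤ B.repr x i} := by
    ext x
    simp [mem_sigmaCone_iff_repr B hB subset_rfl]
  rw [hI, B.interior_setOf_repr_nonneg]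
  rfl

theorem repr_intVec_vSum (i : I) : B.repr (intVec (vSum v I)) i = 1 := by
  have hsum : intVec (vSum v I) = ∑ i : I, (1 : ℝ) • B i := by
    simp only [one_smul, hB]
    rw [Finset.sum_coe_sort I (vR v)]
    ext
    simp [intVec, vSum, vR, Finset.sum_apply]
  rw [hsum, B.repr_sum_self]

theorem IsMinConeOf.notMem_iff_repr_eq_zero {Fam : Finset (Finset (Fin n))} (hFam : IsFan v Fam)
    (hIF : I ∈ Fam) {K : Finset (Fin n)} {w : Fin r → ℝ} (hK : IsMinConeOf v Fam K w)
    (hwI : w ∈ sigmaCone v I) (i : I) : ↑i ∉ K ↔ B.repr w i = 0 := by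
  have hKI : K ⊆ I := hK.2.2 I hIF hwI
  have hwK := (mem_sigmaCone_iff_repr B hB hKI).1 hK.2.1
  refine ⟨(hwK i).2, fun h0 hiK => Finset.notMem_erase (i : Fin n) K ?_⟩
  refine hK.2.2 _ (hFam.downward K hK.1 _ (K.erase_subset _)) ?_ hiK
  rw [mem_sigmaCone_iff_repr B hB ((K.erase_subset _).trans hKI)]
  refine fun j => ⟨(hwK j).1, fun hj => ?_⟩
  by_cases hji : j = i
  · rwa [hji]
  · exact (hwK j).2 fun hjK => hj (Finset.mem_erase.2 ⟨fun h => hji (Subtype.ext h), hjK⟩)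

end MaximalCone

theorem statement12_general
    (r n : ℕ)
    (v : Fin n → Fin r → ℤ)
    (v0 : Fin r → ℝ) (hv0gen : GenericVec v0)
    (Fam : Finset (Finset (Fin n))) (hFam : IsFan v Fam)
    (I : Finset (Fin n)) (hIF : I ∈ Fam) (hIcard : I.card = r)
    (c d : Fin r → ℤ) (hcI : intVec c ∈ sigmaCone v I) (hdI : intVec d ∈ sigmaCone v I)
    (hcd : c + d = vSum v I)
    (Kc Kd : Finset (Fin n))
    (hKc : IsMinConeOf v Fam Kc (intVec c)) (hKd : IsMinConeOf v Fam Kd (intVec d)) :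
    (∀ᶠ ε in nhdsWithin (0 : ℝ) (Set.Ioi 0),
        intVec c + ε • v0 ∈ interior (sigmaCone v I) ∧
        intVec d - ε • v0 ∈ interior (sigmaCone v I))
      ↔ (∃ y ∈ sigmaCone v Kc, v0 + y ∈ sigmaCone v Kd) := by
  set B : Module.Basis I ℝ (Fin r → ℝ) :=
    basisOfLinearIndependentOfCardEqFinrank' _ (hFam.indep I hIF) (by simp [hIcard])
  have hB : ∀ i, B i = vR v i := fun i => by simp [B]
  have hc_nonneg := fun i => ((mem_sigmaCone_iff_repr B hB subset_rfl).1 hcI i).1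
  have hd_nonneg := fun i => ((mem_sigmaCone_iff_repr B hB subset_rfl).1 hdI i).1
  have hcd_repr : ∀ i, B.repr (intVec c) i + B.repr (intVec d) i = 1 := fun i => by
    rw [← Finsupp.add_apply, ← map_add, ← intVec_add, hcd, repr_intVec_vSum B hB]
  have hKcI : Kc ⊆ I := hKc.2.2 I hIF hcI
  have hKdI : Kd ⊆ I := hKd.2.2 I hIF hdI
  simp only [mem_interior_sigmaCone_iff_repr B hB, mem_sigmaCone_iff_repr B hB hKcI,
    mem_sigmaCone_iff_repr B hB hKdI, hKc.notMem_iff_repr_eq_zero B hB hFam hIF hcI,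
    hKd.notMem_iff_repr_eq_zero B hB hFam hIF hdI]
  rw [B.eventually_repr_pos_add_sub_iff hc_nonneg hd_nonneg,
    B.exists_repr_add_iff (hv0gen.repr_ne_zero B hB) hcd_repr]

theorem statement12
    (r n : ℕ) (hr : 1 ≤ r) (hn : r ≤ n)
    (deg : (Fin r → ℝ) →ₗ[ℝ] ℝ)
    (hdegInt : ∀ m : Fin r → ℤ, ∃ k : ℤ, deg (intVec m) = (k : ℝ))
    (v : Fin n → Fin r → ℤ)
    (hv_inj : Function.Injective v)
    (hv_span : Submodule.span ℝ (Set.range (vR v)) = ⊤)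
    (hv_deg : ∀ i, deg (vR v i) = 1)
    (v0 : Fin r → ℝ) (hv0mem : v0 ∈ interior (coneC v)) (hv0gen : GenericVec v0)
    (Fam : Finset (Finset (Fin n))) (hFam : IsFan v Fam)
    (I : Finset (Fin n)) (hIF : I ∈ Fam) (hIcard : I.card = r)
    (c d : Fin r → ℤ) (hcI : intVec c ∈ sigmaCone v I) (hdI : intVec d ∈ sigmaCone v I)
    (hcd : c + d = vSum v I)
    (Kc Kd : Finset (Fin n))
    (hKc : IsMinConeOf v Fam Kc (intVec c)) (hKd : IsMinConeOf v Fam Kd (intVec d)) :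
    (∀ᶠ ε in nhdsWithin (0 : ℝ) (Set.Ioi 0),
        intVec c + ε • v0 ∈ interior (sigmaCone v I) ∧
        intVec d - ε • v0 ∈ interior (sigmaCone v I))
      ↔ (∃ y ∈ sigmaCone v Kc, v0 + y ∈ sigmaCone v Kd) :=
  statement12_general r n v v0 hv0gen Fam hFam I hIF hIcard c d hcI hdI hcd Kc Kd hKc hKd

end BBGKZ
end
end
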